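/- Let d ≥ 1. Let Π be the SNP system with delays consisting of neurons σ1, σ2, σ3, σ4, σ5 and synapses (1,2), (1,3), (2,4), (3,5), where σ1 initially holds one spike and has the single rule a → a (delay 0), σ2 has the single rule a → a (delay 0), σ3 (a child neuron of the split) has the single rule a → a; d, and σ4, σ5 are sink neurons. Then, if σ1 spikes at time t, the sink σ4 receives its spike at time t+1 and the sink σ5 receives its spike at time t+1+d, so the total runtime of Π (the time when both sinks hold one spike) is 1 + d; and there exists an SNP system without delays Π̄ with one source neuron and two sink neurons σ4', σ5' whose total runtime is 1 + d, with σ4' first receiving a spike one step after the source first spikes, σ4' ending with exactly 1 + d spikes and σ5' ending with exactly 1 spike; hence Π̄ simulates the split routing of Π. -/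

import Mathlib

/-!
Formalization of Spiking Neural P (SNP) systems with delays, following
Cabarle–Buño–Adorna, "Time After Time: Notes on Delays In Spiking Neural
P Systems".

A rule `E/a^c → a^b; d` is modelled by the set `lang ⊆ ℕ` of spike counts `k`
with `a^k ∈ L(E)`, together with `c`, `b` and the delay `d`.  Each neuron has
at most one rule (sink neurons, which never fire, have none).  A configuration
assigns to every neuron its spike count `n i` and its remaining closed time
`clk i`.  If a rule with delay `d` fires during the step leading to the
configuration at time `t`, the produced spikes become visible in the
configuration at time `t + d`; spikes sent to a closed neuron are lost.
The first rule application is counted as happening at time `0`, so the total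
runtime (time needed for a spike to arrive at the sink neurons from the source
neurons) is one less than the index of the first configuration in which all
sink neurons hold a spike.
-/

open scoped Classical

structure SNPRule where
  /-- the spike counts accepted by the regular expression `E` -/
  lang : Set ℕ
  c : ℕ
  b : ℕ
  d : ℕ
  c_pos : 1 ≤ c
  b_le_c : b ≤ c

/-- The rule `a^c → a^b; d` (whose regular expression is `E = a^c`). -/
def simpleRule (c b d : ℕ) (hc : 1 ≤ c) (hb : b ≤ c) : SNPRule :=
  ⟨{c}, c, b, d, hc, hb⟩

/-- The rule `a⁺/a → a` (no delay). -/
def plusRule : SNPRule :=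
  ⟨{k | 1 ≤ k}, 1, 1, 0, le_refl 1, le_refl 1⟩

/-- An SNP system of degree `m`: initial spike counts, (at most) one rule per
neuron, and an irreflexive synapse relation. -/
structure SNPSystem (m : ℕ) where
  init : Fin m → ℕ
  rule : Fin m → Option SNPRule
  syn : Fin m → Fin m → Prop
  syn_irrefl : ∀ i, ¬ syn i i

/-- A configuration: spike counts and remaining closed times. -/
structure SNPConfig (m : ℕ) where
  n : Fin m → ℕ
  clk : Fin m → ℕ

namespace SNPSystem

variable {m m' : ℕ}

/-- Neuron `i` is open and its rule is applicable in configuration `C`. -/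
def enabled (S : SNPSystem m) (C : SNPConfig m) (i : Fin m) : Prop :=
  C.clk i = 0 ∧ ∃ r, S.rule i = some r ∧ C.n i ∈ r.lang ∧ r.c ≤ C.n i

/-- Spikes emitted by neuron `i` during the current step: either its rule fires
with delay `0`, or its closed period (after firing a rule with delay `≥ 1`)
expires now. -/
noncomputable def emits (S : SNPSystem m) (C : SNPConfig m) (i : Fin m) : ℕ :=
  match S.rule i with
  | none => 0
  | some r =>
      if C.clk i = 0 ∧ C.n i ∈ r.lang ∧ r.c ≤ C.n i ∧ r.d = 0 then r.b
      else if C.clk i = 1 then r.b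
      else 0

/-- Spikes consumed by neuron `i` if its rule fires in the current step. -/
noncomputable def consumed (S : SNPSystem m) (C : SNPConfig m) (i : Fin m) : ℕ :=
  match S.rule i with
  | none => 0
  | some r => if C.clk i = 0 ∧ C.n i ∈ r.lang ∧ r.c ≤ C.n i then r.c else 0

/-- Remaining closed time of neuron `i` after the current step. -/
noncomputable def nextClk (S : SNPSystem m) (C : SNPConfig m) (i : Fin m) : ℕ :=
  match S.rule i with
  | none => C.clk i - 1
  | some r =>
      if C.clk i = 0 ∧ C.n i ∈ r.lang ∧ r.c ≤ C.n i then r.d else C.clk i - 1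

/-- Spikes sent towards neuron `j` during the current step. -/
noncomputable def sent (S : SNPSystem m) (C : SNPConfig m) (j : Fin m) : ℕ :=
  ∑ i, if S.syn i j then S.emits C i else 0

/-- Spikes actually received by neuron `j` during the current step (spikes sent
to a closed neuron are lost). -/
noncomputable def recv (S : SNPSystem m) (C : SNPConfig m) (j : Fin m) : ℕ :=
  if S.nextClk C j = 0 then S.sent C j else 0

/-- One (synchronized, global-clock) computation step. -/
noncomputable def step (S : SNPSystem m) (C : SNPConfig m) : SNPConfig m where
  n := fun i => C.n i - S.consumed C i + S.recv C i
  clk := fun i => S.nextClk C i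

/-- The initial configuration: all neurons open, spike counts given by `init`. -/
def initConfig (S : SNPSystem m) : SNPConfig m where
  n := S.init
  clk := fun _ => 0

/-- The configuration at time `t`. -/
noncomputable def conf (S : SNPSystem m) (t : ℕ) : SNPConfig m :=
  (S.step)^[t] S.initConfig

/-- A source neuron: no incoming synapses. -/
def isSource (S : SNPSystem m) (i : Fin m) : Prop :=
  ∀ j, ¬ S.syn j i

/-- A sink neuron: no outgoing synapses, and it never fires. -/
def isSink (S : SNPSystem m) (i : Fin m) : Prop :=
  (∀ j, ¬ S.syn i j) ∧ S.rule i = none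

/-- Total time needed for a spike to arrive at the sink neuron(s) from the
source neuron(s); the first rule application counts as happening at time `0`,
whence the `- 1`. -/
noncomputable def totalRuntime (S : SNPSystem m) : ℕ :=
  sInf {t | ∀ i, S.isSink i → 1 ≤ (S.conf t).n i} - 1

/-- The first time (counted as in `totalRuntime`) at which neuron `i` holds a
spike. -/
noncomputable def firstArrivalTime (S : SNPSystem m) (i : Fin m) : ℕ :=
  sInf {t | 1 ≤ (S.conf t).n i} - 1

/-- The first time (counted as in `totalRuntime`) at which neuron `i` spikes. -/
noncomputable def firstSpikeTime (S : SNPSystem m) (i : Fin m) : ℕ :=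
  sInf {t | 1 ≤ S.emits (S.conf t) i}

/-- An SNP system without delays: every rule has `d = 0`. -/
def delayFree (S : SNPSystem m) : Prop :=
  ∀ i r, S.rule i = some r → r.d = 0

/-- `T.Simulates S`: `T` has no delays; spikes arrive at the sink neurons of `T`
at the same time as at the sink neurons of `S` or offset by some constant
integer `k`; and the number of spikes arriving at the sink neurons of `T`
equals that for `S` or is a factor of one of the delays of `S`. -/
noncomputable def Simulates (T : SNPSystem m') (S : SNPSystem m) : Prop :=
  T.delayFree ∧
  (∃ k : ℤ, (T.totalRuntime : ℤ) = (S.totalRuntime : ℤ) + k) ∧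
  (∀ j, T.isSink j → ∀ i, S.isSink i →
    (T.conf (T.totalRuntime + 1)).n j = (S.conf (S.totalRuntime + 1)).n i ∨
    ∃ p r, S.rule p = some r ∧ (T.conf (T.totalRuntime + 1)).n j ∣ r.d)

/-- Sequential routing along a synapse `(i, j)`. -/
def sequentialAt (S : SNPSystem m) (i j : Fin m) : Prop :=
  S.syn i j

/-- Iterative routing: the two neurons form a loop. -/
def iterativeAt (S : SNPSystem m) (i j : Fin m) : Prop :=
  S.syn i j ∧ S.syn j i

/-- A split at neuron `i`: `i` sends its spike to at least two neurons. -/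
def splitAt (S : SNPSystem m) (i : Fin m) : Prop :=
  ∃ j k, j ≠ k ∧ S.syn i j ∧ S.syn i k

/-- A join at neuron `j`: at least two neurons send their spikes to `j`. -/
def joinAt (S : SNPSystem m) (j : Fin m) : Prop :=
  ∃ i k, i ≠ k ∧ S.syn i j ∧ S.syn k j

end SNPSystem

/-- The split system `Π` of the statement: `σ1` (one spike, rule `a → a`) splits to
`σ2` (rule `a → a`) and `σ3` (a child neuron with rule `a → a; d`); `σ2` feeds the
sink `σ4` and `σ3` feeds the sink `σ5`. -/
def splitChildPi (d : ℕ) : SNPSystem 5 where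
  init := ![1, 0, 0, 0, 0]
  rule := ![some (simpleRule 1 1 0 (le_refl 1) (le_refl 1)),
            some (simpleRule 1 1 0 (le_refl 1) (le_refl 1)),
            some (simpleRule 1 1 d (le_refl 1) (le_refl 1)), none, none]
  syn := fun i j =>
    (i.val = 0 ∧ j.val = 1) ∨ (i.val = 0 ∧ j.val = 2) ∨
    (i.val = 1 ∧ j.val = 3) ∨ (i.val = 2 ∧ j.val = 4)
  syn_irrefl := by intro i h; omega

/-! In `Π` the spike of σ1 reaches σ4 through σ2 at time 2, while σ3 stays closed for `d` steps
and delivers its spike to σ5 at time `d + 2`. The delay-free `Π̄` keeps the same synapses and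
replaces the delay by counting: the source starts with `d + 1` spikes and emits one per step
(rule `a⁺/a → a`) to σ2' and σ3'; σ2' forwards each of them to σ4', whereas σ3' fires
`a^(d+1) → a` only once it has collected all `d + 1` spikes, so σ5' is reached at time `d + 2`
like σ5, and σ4' ends up holding `d + 1` spikes. -/

attribute [ext] SNPConfig

namespace SNPSystem

variable {m : ℕ} (S : SNPSystem m)

theorem conf_succ (t : ℕ) : S.conf (t + 1) = S.step (S.conf t) :=
  Function.iterate_succ_apply' S.step t S.initConfig

theorem conf_eq_of_step {f : ℕ → SNPConfig m} (h0 : S.initConfig = f 0)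
    (hstep : ∀ t, S.step (f t) = f (t + 1)) : S.conf = f := by
  funext t
  induction t with
  | zero => exact h0
  | succ t ih => rw [conf_succ, ih, hstep]

variable {S}

theorem firstSpikeTime_eq_zero {i : Fin m} (h : 1 ≤ S.emits S.initConfig i) :
    S.firstSpikeTime i = 0 :=
  Nat.sInf_eq_zero.2 (Or.inl h)

theorem firstArrivalTime_eq_of_iff {i : Fin m} {T : ℕ}
    (h : ∀ t, 1 ≤ (S.conf t).n i ↔ T ≤ t) : S.firstArrivalTime i = T - 1 := by
  rw [firstArrivalTime, show {t | 1 ≤ (S.conf t).n i} = Set.Ici T from Set.ext h, csInf_Ici]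

theorem totalRuntime_eq_of_iff {T : ℕ}
    (h : ∀ t, (∀ i, S.isSink i → 1 ≤ (S.conf t).n i) ↔ T ≤ t) : S.totalRuntime = T - 1 := by
  rw [totalRuntime, show {t | ∀ i, S.isSink i → 1 ≤ (S.conf t).n i} = Set.Ici T from Set.ext h,
    csInf_Ici]

end SNPSystem

open SNPSystem

-- At time `t + 2` the child σ3 is still closed for `d - t` steps; truncated subtraction makes
-- the same formula describe the system after σ5 has received its spike.
def splitChildPiConf (d : ℕ) : ℕ → SNPConfig 5
  | 0 => ⟨![1, 0, 0, 0, 0], 0⟩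
  | 1 => ⟨![0, 1, 1, 0, 0], 0⟩
  | t + 2 => ⟨![0, 0, 0, 1, if d ≤ t then 1 else 0], ![0, 0, d - t, 0, 0]⟩

theorem splitChildPi_step (d t : ℕ) :
    (splitChildPi d).step (splitChildPiConf d t) = splitChildPiConf d (t + 1) := by
  ext i <;> fin_cases i <;>
    rcases t with _ | _ | t <;>
    simp [splitChildPiConf, step, recv, sent, emits, consumed, nextClk, splitChildPi,
      simpleRule, Fin.sum_univ_five] <;> grind

def splitChildPiBar (d : ℕ) : SNPSystem 5 :=
  { splitChildPi d with
    init := ![d + 1, 0, 0, 0, 0]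
    rule := ![some plusRule, some plusRule, some (simpleRule (d + 1) 1 0 (by omega) (by omega)),
      none, none] }

def splitChildPiBarConf (d : ℕ) : ℕ → SNPConfig 5
  | 0 => ⟨![d + 1, 0, 0, 0, 0], 0⟩
  | t + 1 => if t ≤ d then ⟨![d - t, 1, t + 1, t, 0], 0⟩ else ⟨![0, 0, 0, d + 1, 1], 0⟩

theorem splitChildPiBar_step (d t : ℕ) :
    (splitChildPiBar d).step (splitChildPiBarConf d t) = splitChildPiBarConf d (t + 1) := by
  rcases t with _ | t <;> simp only [splitChildPiBarConf] <;> split_ifs <;>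
    ext i <;> fin_cases i <;>
    simp [step, recv, sent, emits, consumed, nextClk, splitChildPiBar, splitChildPi, plusRule,
      simpleRule, Fin.sum_univ_five] <;> grind

theorem splitChildPi_conf (d : ℕ) : (splitChildPi d).conf = splitChildPiConf d :=
  conf_eq_of_step _ rfl (splitChildPi_step d)

theorem splitChildPiBar_conf (d : ℕ) : (splitChildPiBar d).conf = splitChildPiBarConf d :=
  conf_eq_of_step _ rfl (splitChildPiBar_step d)

theorem splitChildPi_conf_n_three (d t : ℕ) :
    ((splitChildPi d).conf t).n 3 = if 2 ≤ t then 1 else 0 := by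
  rcases t with _ | _ | t <;> simp [splitChildPi_conf, splitChildPiConf]

theorem splitChildPi_conf_n_four (d t : ℕ) :
    ((splitChildPi d).conf t).n 4 = if d + 2 ≤ t then 1 else 0 := by
  rcases t with _ | _ | t <;> simp [splitChildPi_conf, splitChildPiConf]

theorem splitChildPiBar_conf_n_three (d t : ℕ) :
    ((splitChildPiBar d).conf t).n 3 = min (t - 1) (d + 1) := by
  rw [splitChildPiBar_conf]
  rcases t with _ | t
  · rfl
  · rw [splitChildPiBarConf]
    split_ifs <;> simp <;> omega

theorem splitChildPiBar_conf_n_four (d t : ℕ) :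
    ((splitChildPiBar d).conf t).n 4 = if d + 2 ≤ t then 1 else 0 := by
  rw [splitChildPiBar_conf]
  rcases t with _ | t
  · rfl
  · rw [splitChildPiBarConf]
    split_ifs <;> simp <;> omega

theorem splitChildPi_isSink_iff (d : ℕ) (i : Fin 5) : (splitChildPi d).isSink i ↔ i = 3 ∨ i = 4 := by
  fin_cases i <;> simp [isSink, splitChildPi]

theorem splitChildPiBar_isSink_iff (d : ℕ) (i : Fin 5) :
    (splitChildPiBar d).isSink i ↔ i = 3 ∨ i = 4 := by
  fin_cases i <;> simp [isSink, splitChildPiBar, splitChildPi]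

theorem splitChildPiBar_isSource_iff (d : ℕ) (i : Fin 5) :
    (splitChildPiBar d).isSource i ↔ i = 0 := by
  fin_cases i <;> simp [isSource, splitChildPiBar, splitChildPi, Fin.exists_fin_succ]

theorem splitChildPi_firstSpikeTime_zero (d : ℕ) : (splitChildPi d).firstSpikeTime 0 = 0 :=
  firstSpikeTime_eq_zero (by simp [emits, initConfig, splitChildPi, simpleRule])

theorem splitChildPiBar_firstSpikeTime_zero (d : ℕ) : (splitChildPiBar d).firstSpikeTime 0 = 0 :=
  firstSpikeTime_eq_zero (by simp [emits, initConfig, splitChildPiBar, plusRule])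

theorem splitChildPi_firstArrivalTime_three (d : ℕ) : (splitChildPi d).firstArrivalTime 3 = 1 :=
  firstArrivalTime_eq_of_iff (T := 2) fun t => by
    rw [splitChildPi_conf_n_three]; split_ifs <;> omega

theorem splitChildPi_firstArrivalTime_four (d : ℕ) :
    (splitChildPi d).firstArrivalTime 4 = 1 + d := by
  rw [firstArrivalTime_eq_of_iff (T := d + 2) fun t => by
    rw [splitChildPi_conf_n_four]; split_ifs <;> omega]
  omega

theorem splitChildPiBar_firstArrivalTime_three (d : ℕ) :
    (splitChildPiBar d).firstArrivalTime 3 = 1 :=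
  firstArrivalTime_eq_of_iff (T := 2) fun t => by
    rw [splitChildPiBar_conf_n_three]; omega

theorem splitChildPi_totalRuntime (d : ℕ) : (splitChildPi d).totalRuntime = 1 + d := by
  rw [totalRuntime_eq_of_iff (T := d + 2) fun t => by
    simp only [splitChildPi_isSink_iff, forall_eq_or_imp, forall_eq, splitChildPi_conf_n_three,
      splitChildPi_conf_n_four]
    split_ifs <;> omega]
  omega

theorem splitChildPiBar_totalRuntime (d : ℕ) : (splitChildPiBar d).totalRuntime = 1 + d := by
  rw [totalRuntime_eq_of_iff (T := d + 2) fun t => by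
    simp only [splitChildPiBar_isSink_iff, forall_eq_or_imp, forall_eq,
      splitChildPiBar_conf_n_three, splitChildPiBar_conf_n_four]
    split_ifs <;> omega]
  omega

theorem splitChildPiBar_delayFree (d : ℕ) : (splitChildPiBar d).delayFree := by
  intro i r hr
  fin_cases i <;> simp [splitChildPiBar, splitChildPi] at hr <;> simp [← hr, plusRule, simpleRule]

theorem splitChildPiBar_simulates (d : ℕ) : (splitChildPiBar d).Simulates (splitChildPi d) := by
  refine ⟨splitChildPiBar_delayFree d,
    ⟨0, by rw [splitChildPiBar_totalRuntime, splitChildPi_totalRuntime, add_zero]⟩, ?_⟩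
  intro j hj i hi
  rw [splitChildPiBar_isSink_iff] at hj
  rw [splitChildPi_isSink_iff] at hi
  rw [splitChildPiBar_totalRuntime, splitChildPi_totalRuntime]
  rcases hj with rfl | rfl
  · exact Or.inr ⟨0, _, rfl, dvd_zero _⟩
  · left
    rcases hi with rfl | rfl <;>
      simp [splitChildPiBar_conf_n_four, splitChildPi_conf_n_three, splitChildPi_conf_n_four]

theorem split_child_delay_simulation_general (d : ℕ) :
    -- if σ1 spikes at time t then σ4 receives its spike at time t + 1
    (splitChildPi d).firstArrivalTime 3 = (splitChildPi d).firstSpikeTime 0 + 1 ∧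
    -- and σ5 receives its spike at time t + 1 + d
    (splitChildPi d).firstArrivalTime 4 = (splitChildPi d).firstSpikeTime 0 + 1 + d ∧
    -- so the total runtime of Π (when both sinks hold one spike) is 1 + d
    (splitChildPi d).totalRuntime = 1 + d ∧
    -- there is a delay-free Π̄ with one source and two sinks σ4', σ5', total runtime
    -- 1 + d, with σ4' first receiving a spike one step after the source first spikes,
    -- σ4' ending with exactly 1 + d spikes and σ5' ending with exactly 1 spike
    (∃ (m : ℕ) (T : SNPSystem m) (src s4 s5 : Fin m),
      T.delayFree ∧
      T.isSource src ∧ (∀ i, T.isSource i → i = src) ∧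
      s4 ≠ s5 ∧ T.isSink s4 ∧ T.isSink s5 ∧ (∀ i, T.isSink i → i = s4 ∨ i = s5) ∧
      T.totalRuntime = 1 + d ∧
      T.firstArrivalTime s4 = T.firstSpikeTime src + 1 ∧
      (∀ t, T.totalRuntime + 1 ≤ t → (T.conf t).n s4 = 1 + d) ∧
      (∀ t, T.totalRuntime + 1 ≤ t → (T.conf t).n s5 = 1) ∧
      -- hence Π̄ simulates the split routing of Π
      T.Simulates (splitChildPi d)) := by
  refine ⟨by rw [splitChildPi_firstArrivalTime_three, splitChildPi_firstSpikeTime_zero],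
    by rw [splitChildPi_firstArrivalTime_four, splitChildPi_firstSpikeTime_zero, zero_add],
    splitChildPi_totalRuntime d, 5, splitChildPiBar d, 0, 3, 4, splitChildPiBar_delayFree d,
    (splitChildPiBar_isSource_iff d 0).2 rfl, fun i => (splitChildPiBar_isSource_iff d i).1,
    by decide, (splitChildPiBar_isSink_iff d 3).2 (.inl rfl),
    (splitChildPiBar_isSink_iff d 4).2 (.inr rfl), fun i => (splitChildPiBar_isSink_iff d i).1,
    splitChildPiBar_totalRuntime d,
    by rw [splitChildPiBar_firstArrivalTime_three, splitChildPiBar_firstSpikeTime_zero],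
    fun t ht => by
      rw [splitChildPiBar_totalRuntime] at ht
      rw [splitChildPiBar_conf_n_three]
      omega,
    fun t ht => by
      rw [splitChildPiBar_totalRuntime] at ht
      rw [splitChildPiBar_conf_n_four, if_pos (by omega)],
    splitChildPiBar_simulates d⟩

theorem split_child_delay_simulation (d : ℕ) (hd : 1 ≤ d) :
    -- if σ1 spikes at time t then σ4 receives its spike at time t + 1
    (splitChildPi d).firstArrivalTime 3 = (splitChildPi d).firstSpikeTime 0 + 1 ∧
    -- and σ5 receives its spike at time t + 1 + d
    (splitChildPi d).firstArrivalTime 4 = (splitChildPi d).firstSpikeTime 0 + 1 + d ∧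
    -- so the total runtime of Π (when both sinks hold one spike) is 1 + d
    (splitChildPi d).totalRuntime = 1 + d ∧
    -- there is a delay-free Π̄ with one source and two sinks σ4', σ5', total runtime
    -- 1 + d, with σ4' first receiving a spike one step after the source first spikes,
    -- σ4' ending with exactly 1 + d spikes and σ5' ending with exactly 1 spike
    (∃ (m : ℕ) (T : SNPSystem m) (src s4 s5 : Fin m),
      T.delayFree ∧
      T.isSource src ∧ (∀ i, T.isSource i → i = src) ∧
      s4 ≠ s5 ∧ T.isSink s4 ∧ T.isSink s5 ∧ (∀ i, T.isSink i → i = s4 ∨ i = s5) ∧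
      T.totalRuntime = 1 + d ∧
      T.firstArrivalTime s4 = T.firstSpikeTime src + 1 ∧
      (∀ t, T.totalRuntime + 1 ≤ t → (T.conf t).n s4 = 1 + d) ∧
      (∀ t, T.totalRuntime + 1 ≤ t → (T.conf t).n s5 = 1) ∧
      -- hence Π̄ simulates the split routing of Π
      T.Simulates (splitChildPi d)) :=
  split_child_delay_simulation_general d
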